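/- arXiv:1505.06582 — 2 statements merged into one kernel-verified Lean document; each statement's English description precedes it below -/
import Mathlib

section
/- If the characteristic polynomial of an invertible linear map f : F_2^p → F_2^p is irreducible, then all nonzero orbits of f have the same length, namely the multiplicative order of a root of the characteristic polynomial in F_{2^p}. -/
/-! If `P` is irreducible and annihilates `f`, then the polynomials `q` with `q(f) v = 0` for a
fixed `v ≠ 0` form the ideal `(P)`: otherwise some `q ∉ (P)` would be coprime to `P`, and a Bézout
identity `a P + b q = 1` evaluated at `f` and applied to `v` would give `v = 0`. Taking
`q = X ^ n - 1` shows that `f^[n] v = v` exactly when `X ^ n = 1` in `K[X] ⧸ (P)`, so the period of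
every nonzero vector is the order of the root of `P`. -/

open Polynomial Function

section IrreducibleAnnihilator

variable {K V : Type*} [Field K] [AddCommGroup V] [Module K V]
  {f : Module.End K V} {P : K[X]}

theorem aeval_apply_eq_zero_iff_dvd (hP : Irreducible P) (hfP : aeval f P = 0) {v : V}
    (hv : v ≠ 0) (q : K[X]) : aeval f q v = 0 ↔ P ∣ q := by
  refine ⟨fun hq => ?_, ?_⟩
  · by_contra hPq
    obtain ⟨a, b, hab⟩ := hP.coprime_iff_not_dvd.mpr hPq
    have hv0 : v = aeval f (a * P + b * q) v := by simp [hab]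
    simp [hfP, hq] at hv0
    exact hv hv0
  · rintro ⟨c, rfl⟩
    simp [hfP]

theorem isPeriodicPt_iff_root_pow_eq_one (hP : Irreducible P) (hfP : aeval f P = 0) {v : V}
    (hv : v ≠ 0) (n : ℕ) : IsPeriodicPt f n v ↔ AdjoinRoot.root P ^ n = 1 := by
  have hfixed : IsPeriodicPt f n v ↔ aeval f (X ^ n - 1 : K[X]) v = 0 := by
    rw [IsPeriodicPt, IsFixedPt, ← Module.End.coe_pow]
    simp [sub_eq_zero]
  rw [hfixed, aeval_apply_eq_zero_iff_dvd hP hfP hv, ← AdjoinRoot.mk_eq_zero]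
  simp [sub_eq_zero]

theorem minimalPeriod_eq_orderOf_root (hP : Irreducible P) (hfP : aeval f P = 0) {v : V}
    (hv : v ≠ 0) : minimalPeriod f v = orderOf (AdjoinRoot.root P) := by
  rw [orderOf, minimalPeriod_eq_minimalPeriod_iff]
  intro n
  rw [isPeriodicPt_iff_root_pow_eq_one hP hfP hv, isPeriodicPt_mul_iff_pow_eq_one]

end IrreducibleAnnihilator

/-- If the characteristic polynomial of an invertible linear map
`f : F_2^p → F_2^p` is irreducible, then all nonzero orbits of `f` have the same length,
namely the multiplicative order of a root of the characteristic polynomial in `F_{2^p}`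
(realized as `AdjoinRoot P`). -/
theorem irreducible_charpoly_orbits_length (p : ℕ)
    (f : (Fin p → ZMod 2) ≃ₗ[ZMod 2] (Fin p → ZMod 2))
    (hirr : Irreducible
      (LinearMap.charpoly (f : (Fin p → ZMod 2) →ₗ[ZMod 2] (Fin p → ZMod 2)))) :
    ∀ s : Fin p → ZMod 2, s ≠ 0 →
      Function.minimalPeriod (⇑f) s =
        orderOf (AdjoinRoot.root
          (LinearMap.charpoly (f : (Fin p → ZMod 2) →ₗ[ZMod 2] (Fin p → ZMod 2)))) :=
  fun _ hs => minimalPeriod_eq_orderOf_root hirr (LinearMap.aeval_self_charpoly _) hs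
end

section
/- For a linear map f : F_2^p → F_2^p with primitive characteristic polynomial, the one-bit output o_1 : F_2^p → F_2 (any nonzero linear functional) yields k(1) = p; that is, the map s ↦ (o_1(s), o_1(f(s)), ..., o_1(f^{p-1}(s))) is a linear bijection from F_2^p to F_2^p. -/
/-- A polynomial `P` over `F_2` of "degree `p`" is primitive iff it is irreducible and
the multiplicative order of `z` modulo `P` is exactly `2^p - 1`. -/
def IsPrimitivePoly (p : ℕ) (P : Polynomial (ZMod 2)) : Prop :=
  Irreducible P ∧ P ∣ Polynomial.X ^ (2 ^ p - 1) - 1 ∧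
    ∀ n : ℕ, 0 < n → n < 2 ^ p - 1 → ¬ P ∣ Polynomial.X ^ n - 1

/-- For a linear map `f : F_2^p → F_2^p` with primitive characteristic
polynomial, any nonzero linear functional `o_1 : F_2^p → F_2` yields `k(1) = p`:
the map `s ↦ (o_1(s), o_1(f(s)), ..., o_1(f^{p-1}(s)))` is a bijection `F_2^p → F_2^p`. -/
theorem one_bit_output_full_equidistribution (p : ℕ)
    (f : (Fin p → ZMod 2) →ₗ[ZMod 2] (Fin p → ZMod 2))
    (hprim : IsPrimitivePoly p (LinearMap.charpoly f))
    (o1 : (Fin p → ZMod 2) →ₗ[ZMod 2] ZMod 2) (ho1 : o1 ≠ 0) :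
    Function.Bijective
      (fun (s : Fin p → ZMod 2) (i : Fin p) => o1 ((f ^ (i : ℕ)) s)) := by
  set L : (Fin p → ZMod 2) →ₗ[ZMod 2] (Fin p → ZMod 2) :=
    LinearMap.pi (fun i : Fin p => o1 ∘ₗ (f ^ (i : ℕ))) with hL
  have hfun : (fun (s : Fin p → ZMod 2) (i : Fin p) => o1 ((f ^ (i : ℕ)) s)) = ⇑L := rfl
  rw [hfun]
  have hirr : Irreducible (LinearMap.charpoly f) := hprim.1
  -- injectivity
  have hinj : Function.Injective L := by
    rw [← LinearMap.ker_eq_bot]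
    rw [Submodule.eq_bot_iff]
    intro s hs
    by_contra hsne
    -- o1 (f^i s) = 0 for all i < p
    have hval : ∀ i : Fin p, o1 ((f ^ (i : ℕ)) s) = 0 := by
      intro i
      have := congrFun (LinearMap.mem_ker.mp hs) i
      simpa [L] using this
    -- linear independence of f^i s
    have hli : LinearIndependent (ZMod 2) (fun i : Fin p => (f ^ (i : ℕ)) s) := by
      rw [Fintype.linearIndependent_iff]
      intro g hg
      by_contra hgne
      push_neg at hgne
      obtain ⟨j, hj⟩ := hgne
      set q : Polynomial (ZMod 2) := ∑ i : Fin p, Polynomial.C (g i) * Polynomial.X ^ (i : ℕ)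
        with hq
      have hqne : q ≠ 0 := by
        intro h0
        apply hj
        have := congrArg (Polynomial.coeff · (j : ℕ)) h0
        simpa [q, Polynomial.finset_sum_coeff, Polynomial.coeff_C_mul,
          Polynomial.coeff_X_pow, Fin.val_eq_val, Finset.sum_ite_eq'] using this
      have hqdeg : q.degree < (LinearMap.charpoly f).degree := by
        have hdeg : (LinearMap.charpoly f).degree = (p : WithBot ℕ) := by
          rw [Polynomial.degree_eq_natDegree (LinearMap.charpoly_monic f).ne_zero,
            f.charpoly_natDegree]
          simp [Module.finrank_fintype_fun_eq_card]
        rw [hdeg]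
        apply lt_of_le_of_lt (Polynomial.degree_sum_le _ _)
        rw [Finset.sup_lt_iff (by exact_mod_cast WithBot.bot_lt_coe p)]
        intro i _
        exact lt_of_le_of_lt (Polynomial.degree_C_mul_X_pow_le _ _)
          (by exact_mod_cast Nat.cast_lt.mpr i.isLt)
      have hndvd : ¬ (LinearMap.charpoly f) ∣ q := fun hdvd =>
        hqne (Polynomial.eq_zero_of_dvd_of_degree_lt hdvd hqdeg)
      have hcop : IsCoprime (LinearMap.charpoly f) q :=
        (hirr.coprime_iff_not_dvd).mpr hndvd
      obtain ⟨u, v, huv⟩ := hcop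
      have haq : (Polynomial.aeval f q) s = 0 := by
        rw [hq]
        simp only [map_sum, map_mul, Polynomial.aeval_C, Polynomial.aeval_X_pow]
        rw [LinearMap.sum_apply]
        simpa [Algebra.smul_def] using hg
      have hCH : (Polynomial.aeval f (LinearMap.charpoly f)) s = 0 := by
        rw [LinearMap.aeval_self_charpoly]; rfl
      have : s = 0 := by
        have := congrArg (fun g : Module.End (ZMod 2) (Fin p → ZMod 2) => g s)
          (congrArg (Polynomial.aeval f) huv)
        simpa [map_add, map_mul, Module.End.mul_apply, haq, hCH] using this.symm
      exact hsne this
    -- span = top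
    have hspan : Submodule.span (ZMod 2) (Set.range fun i : Fin p => (f ^ (i : ℕ)) s) = ⊤ := by
      apply LinearIndependent.span_eq_top_of_card_eq_finrank' hli
      simp [Module.finrank_fintype_fun_eq_card]
    -- o1 = 0
    apply ho1
    rw [← LinearMap.ker_eq_top, ← top_le_iff, ← hspan, Submodule.span_le]
    rintro x ⟨i, rfl⟩
    exact hval i
  exact ⟨hinj, (LinearMap.injective_iff_surjective).mp hinj⟩
end
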